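/- Let H be a k-uniform hypergraph with m edges, no isolated vertices, minimum degree δ, and independence number α. Then λ_1(H) ≥ km/(km - αδ). -/

import Mathlib

open Finset

variable {n : ℕ}

def hdeg (E : Finset (Finset (Fin n))) (v : Fin n) : ℕ :=
  (E.filter fun e => v ∈ e).card

def codeg (E : Finset (Finset (Fin n))) (u v : Fin n) : ℕ :=
  (E.filter fun e => u ∈ e ∧ v ∈ e).card

noncomputable def adjMat (E : Finset (Finset (Fin n))) : Matrix (Fin n) (Fin n) ℝ :=
  fun u v => if u = v then 0
    else ∑ e ∈ E.filter (fun e => u ∈ e ∧ v ∈ e), (1 : ℝ) / ((e.card : ℝ) - 1)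

noncomputable def lapMat (E : Finset (Finset (Fin n))) : Matrix (Fin n) (Fin n) ℝ :=
  Matrix.diagonal (fun v => (hdeg E v : ℝ)) - adjMat E

noncomputable def normLap (E : Finset (Finset (Fin n))) : Matrix (Fin n) (Fin n) ℝ :=
  Matrix.diagonal (fun v => (hdeg E v : ℝ) ^ (-(1/2) : ℝ)) * lapMat E *
    Matrix.diagonal (fun v => (hdeg E v : ℝ) ^ (-(1/2) : ℝ))

noncomputable def eigsAsc (M : Matrix (Fin n) (Fin n) ℝ) : Fin n → ℝ :=
  if h : M.IsHermitian then (h.eigenvalues ∘ Tuple.sort h.eigenvalues) else 0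

noncomputable def lamMax {n : ℕ} (M : Matrix (Fin n) (Fin n) ℝ) : ℝ :=
  ⨆ i, eigsAsc M i

noncomputable def volR {n : ℕ} (E : Finset (Finset (Fin n))) (S : Finset (Fin n)) : ℝ :=
  ∑ v ∈ S, (hdeg E v : ℝ)

noncomputable def bndR {n : ℕ} (E : Finset (Finset (Fin n))) (S : Finset (Fin n)) : ℝ :=
  ∑ u ∈ S, ∑ v ∈ Sᶜ, (codeg E u v : ℝ)


/-!
Let `S` be a maximum independent set, `σ = vol S ≥ αδ` and `τ = vol Sᶜ`, so `σ + τ = km`.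
Test the Rayleigh quotient of `L(H)` on `x = D^{1/2} f` with `f = (σ + τ) 𝟙_S - σ 𝟙`
(`τ` on `S`, `-σ` off `S`). Then `xᵀ L(H) x = fᵀ (D - A) f`; as `D - A` kills constants this is
`(σ + τ)² 𝟙_Sᵀ (D - A) 𝟙_S = (σ + τ)² σ`, because `A` vanishes on `S × S` by independence.
Meanwhile `xᵀ x = στ(σ + τ)`, hence `λ₁ ≥ (σ + τ) / τ ≥ km / (km - αδ)`.
-/

open Matrix

lemma Real.rpow_neg_one_half_mul_sqrt {a : ℝ} (ha : 0 < a) : a ^ (-(1 / 2) : ℝ) * √a = 1 := by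
  rw [Real.rpow_neg ha.le, ← Real.sqrt_eq_rpow, inv_mul_cancel₀ (Real.sqrt_pos.mpr ha).ne']

namespace Matrix

variable {ι R : Type*} [Fintype ι] [CommRing R]

lemma IsSymm.dotProduct_mulVec_add_smul_one {M : Matrix ι ι R} (hM : M.IsSymm)
    (h1 : M *ᵥ 1 = 0) (g : ι → R) (a b : R) :
    (a • g + b • 1) ⬝ᵥ M *ᵥ (a • g + b • 1) = a ^ 2 * (g ⬝ᵥ M *ᵥ g) := by
  have h1' : 1 ⬝ᵥ M *ᵥ g = 0 := by
    rw [dotProduct_mulVec, ← mulVec_transpose, hM.eq, h1, zero_dotProduct]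
  rw [mulVec_add, mulVec_smul, mulVec_smul, h1, smul_zero, add_zero, add_dotProduct,
    smul_dotProduct, smul_dotProduct, dotProduct_smul, dotProduct_smul, h1']
  simp only [smul_eq_mul, mul_zero, add_zero]
  ring

lemma indicator_dotProduct_mulVec_indicator (M : Matrix ι ι R) (S : Finset ι) :
    (S : Set ι).indicator 1 ⬝ᵥ M *ᵥ (S : Set ι).indicator 1 = ∑ u ∈ S, ∑ v ∈ S, M u v := by
  classical
  simp only [dotProduct, Set.indicator_apply, SetLike.mem_coe, Pi.one_apply, mulVec, mul_ite,
    mul_one, mul_zero, sum_ite_mem, univ_inter, mul_sum, ite_mul, one_mul, zero_mul,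
    sum_ite_irrel, sum_const_zero]

lemma dotProduct_diagonal_mul_mul_diagonal_mulVec [DecidableEq ι] (d x : ι → R)
    (L : Matrix ι ι R) :
    x ⬝ᵥ (diagonal d * L * diagonal d) *ᵥ x = (d * x) ⬝ᵥ L *ᵥ (d * x) := by
  have hd : ∀ y, diagonal d *ᵥ y = d * y := fun y => funext (mulVec_diagonal d y)
  rw [← mulVec_mulVec, ← mulVec_mulVec, hd]
  simp only [dotProduct, hd, Pi.mul_apply]
  exact sum_congr rfl fun i _ => by ring

end Matrix

namespace Matrix.IsHermitian

variable {M : Matrix (Fin n) (Fin n) ℝ}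

lemma lamMax_eq_iSup_eigenvalues (hM : M.IsHermitian) : lamMax M = ⨆ i, hM.eigenvalues i := by
  rw [lamMax, eigsAsc, dif_pos hM]
  exact (Tuple.sort hM.eigenvalues).surjective.iSup_comp _

lemma eigenvalues_le_lamMax (hM : M.IsHermitian) (i : Fin n) : hM.eigenvalues i ≤ lamMax M :=
  hM.lamMax_eq_iSup_eigenvalues ▸ le_ciSup (Set.finite_range _).bddAbove i

lemma posSemidef_lamMax_smul_one_sub (hM : M.IsHermitian) : (lamMax M • 1 - M).PosSemidef := by
  refine posSemidef_iff_isHermitian_and_spectrum_nonneg.mpr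
    ⟨(isHermitian_one.smul (IsSelfAdjoint.all _)).sub hM, ?_⟩
  rw [← Algebra.algebraMap_eq_smul_one, ← spectrum.singleton_sub_eq,
    hM.spectrum_real_eq_range_eigenvalues]
  rintro _ ⟨_, rfl, _, ⟨i, rfl⟩, rfl⟩
  exact sub_nonneg.mpr (hM.eigenvalues_le_lamMax i)

lemma dotProduct_mulVec_le_lamMax (hM : M.IsHermitian) (x : Fin n → ℝ) :
    x ⬝ᵥ M *ᵥ x ≤ lamMax M * (x ⬝ᵥ x) := by
  have := hM.posSemidef_lamMax_smul_one_sub.dotProduct_mulVec_nonneg x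
  rwa [star_trivial, sub_mulVec, dotProduct_sub, smul_mulVec, one_mulVec, dotProduct_smul,
    smul_eq_mul, sub_nonneg] at this

end Matrix.IsHermitian

section Hypergraph

variable (E : Finset (Finset (Fin n)))

lemma adjMat_comm (u v : Fin n) : adjMat E u v = adjMat E v u := by
  simp only [adjMat, eq_comm (a := u), and_comm]

lemma adjMat_eq_zero_of_codeg_eq_zero {u v : Fin n} (h : codeg E u v = 0) :
    adjMat E u v = 0 := by
  rw [adjMat, card_eq_zero.mp h, sum_empty, ite_self]

lemma sum_hdeg_eq_mul_card {k : ℕ} (hunif : ∀ e ∈ E, e.card = k) :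
    ∑ v, hdeg E v = k * E.card := by
  simp only [hdeg, card_filter]
  rw [sum_comm, sum_congr rfl fun e he => by
    rw [sum_boole, filter_mem_eq_inter, univ_inter, hunif e he]]
  simp [mul_comm]

/-- Each edge `e ∋ u` contributes `1 / (|e| - 1)` for each of the `|e| - 1` other vertices. -/
lemma sum_adjMat_eq_hdeg (hE : ∀ e ∈ E, 2 ≤ e.card) (u : Fin n) :
    ∑ v, adjMat E u v = hdeg E u := by
  have hrow : ∀ v, adjMat E u v
      = ∑ e ∈ E, if u ∈ e ∧ v ∈ e.erase u then 1 / ((e.card : ℝ) - 1) else 0 := by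
    intro v
    rw [adjMat, sum_filter]
    split_ifs with huv
    · simp [huv]
    · refine sum_congr rfl fun e _ => if_congr ?_ rfl rfl
      simp [mem_erase, Ne.symm huv]
  have hedge : ∀ e ∈ E, (∑ v, if u ∈ e ∧ v ∈ e.erase u then 1 / ((e.card : ℝ) - 1) else 0)
      = if u ∈ e then 1 else 0 := by
    intro e he
    by_cases hu : u ∈ e
    · have h2 := hE e he
      have : (2 : ℝ) ≤ e.card := by exact_mod_cast h2
      simp only [hu, true_and, if_true, sum_ite_mem, univ_inter, sum_const,
        card_erase_of_mem hu, nsmul_eq_mul]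
      rw [Nat.cast_pred (by omega), mul_one_div, div_self (by linarith)]
    · simp [hu]
  rw [sum_congr rfl fun v _ => hrow v, sum_comm, sum_congr rfl hedge, hdeg, card_filter]
  push_cast
  rfl

lemma lapMat_isSymm : (lapMat E).IsSymm :=
  (isSymm_diagonal _).sub (Matrix.ext fun u v => adjMat_comm E v u)

lemma normLap_isHermitian : (normLap E).IsHermitian := by
  have hD := isHermitian_diagonal fun v => (hdeg E v : ℝ) ^ (-(1 / 2) : ℝ)
  rw [normLap, IsHermitian, conjTranspose_mul, conjTranspose_mul, hD.eq,
    conjTranspose_eq_transpose_of_trivial, (lapMat_isSymm E).eq, mul_assoc]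

lemma lapMat_mulVec_one (hE : ∀ e ∈ E, 2 ≤ e.card) : lapMat E *ᵥ 1 = 0 := by
  ext u
  rw [lapMat, sub_mulVec, Pi.sub_apply, mulVec_diagonal]
  simp [mulVec, dotProduct, sum_adjMat_eq_hdeg E hE u]

lemma indicator_dotProduct_lapMat_mulVec_indicator {S : Finset (Fin n)}
    (hS : ∀ u ∈ S, ∀ v ∈ S, u ≠ v → codeg E u v = 0) :
    (S : Set (Fin n)).indicator 1 ⬝ᵥ lapMat E *ᵥ (S : Set (Fin n)).indicator 1 = volR E S := by
  have hA : ∀ u ∈ S, ∀ v ∈ S, adjMat E u v = 0 := by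
    intro u hu v hv
    by_cases huv : u = v
    · simp [adjMat, huv]
    · exact adjMat_eq_zero_of_codeg_eq_zero E (hS u hu v hv huv)
  rw [indicator_dotProduct_mulVec_indicator, volR]
  refine sum_congr rfl fun u hu => ?_
  simp [lapMat, sum_sub_distrib, diagonal_apply, hu, sum_eq_zero (hA u hu)]

lemma dotProduct_normLap_mulVec (hiso : ∀ v, 0 < hdeg E v) (f : Fin n → ℝ) :
    ((fun v => √(hdeg E v : ℝ)) * f) ⬝ᵥ normLap E *ᵥ ((fun v => √(hdeg E v : ℝ)) * f)
      = f ⬝ᵥ lapMat E *ᵥ f := by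
  have hf : (fun v => (hdeg E v : ℝ) ^ (-(1 / 2) : ℝ)) * ((fun v => √(hdeg E v : ℝ)) * f)
      = f := by
    ext v
    simp only [Pi.mul_apply]
    rw [← mul_assoc, Real.rpow_neg_one_half_mul_sqrt (by exact_mod_cast hiso v), one_mul]
  rw [normLap, dotProduct_diagonal_mul_mul_diagonal_mulVec, hf]

lemma volR_add_volR_compl_le_lamMax_mul (hE : ∀ e ∈ E, 2 ≤ e.card)
    (hiso : ∀ v, 0 < hdeg E v) {S : Finset (Fin n)}
    (hS : ∀ u ∈ S, ∀ v ∈ S, u ≠ v → codeg E u v = 0) (hSne : S.Nonempty) :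
    volR E S + volR E Sᶜ ≤ lamMax (normLap E) * volR E Sᶜ := by
  set σ := volR E S
  set τ := volR E Sᶜ
  set f : Fin n → ℝ := (σ + τ) • (S : Set (Fin n)).indicator 1 + (-σ) • 1 with hf
  set x := (fun v => √(hdeg E v : ℝ)) * f
  have hσ : 0 < σ := sum_pos (fun v _ => by exact_mod_cast hiso v) hSne
  have hτ : 0 ≤ τ := sum_nonneg fun v _ => by positivity
  have hquad : x ⬝ᵥ normLap E *ᵥ x = (σ + τ) ^ 2 * σ := by
    rw [dotProduct_normLap_mulVec E hiso, hf,
      (lapMat_isSymm E).dotProduct_mulVec_add_smul_one (lapMat_mulVec_one E hE),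
      indicator_dotProduct_lapMat_mulVec_indicator E hS]
  have hx : ∀ v, x v * x v = hdeg E v * f v ^ 2 := fun v => by
    simp only [x, Pi.mul_apply]
    rw [mul_mul_mul_comm, Real.mul_self_sqrt (Nat.cast_nonneg _), sq]
  have hnorm : x ⬝ᵥ x = σ * τ * (σ + τ) := by
    rw [dotProduct, sum_congr rfl fun v _ => hx v, ← sum_add_sum_compl S]
    have hin : ∑ v ∈ S, (hdeg E v : ℝ) * f v ^ 2 = σ * τ ^ 2 :=
      (sum_congr rfl fun v hv => by simp [hf, hv]).trans (sum_mul _ _ _).symm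
    have hout : ∑ v ∈ Sᶜ, (hdeg E v : ℝ) * f v ^ 2 = τ * σ ^ 2 :=
      (sum_congr rfl fun v hv => by simp [hf, mem_compl.mp hv]).trans (sum_mul _ _ _).symm
    rw [hin, hout]
    ring
  have hray := (normLap_isHermitian E).dotProduct_mulVec_le_lamMax x
  rw [hquad, hnorm] at hray
  refine le_of_mul_le_mul_left ?_ (by positivity : 0 < σ * (σ + τ))
  linarith

end Hypergraph

theorem stmt9 (n k m α δ : ℕ) (hk : 2 ≤ k) (E : Finset (Finset (Fin n)))
    (hunif : ∀ e ∈ E, e.card = k) (hm : E.card = m) (hiso : ∀ v : Fin n, 0 < hdeg E v)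
    (hδ : IsLeast (Set.range (hdeg E)) δ)
    (hα : IsGreatest {c : ℕ | ∃ S : Finset (Fin n), S.card = c ∧
        ∀ u ∈ S, ∀ v ∈ S, u ≠ v → codeg E u v = 0} α) :
    (k : ℝ) * (m : ℝ) / ((k : ℝ) * (m : ℝ) - (α : ℝ) * (δ : ℝ)) ≤ lamMax (normLap E) := by
  obtain ⟨v₀, hv₀⟩ := hδ.1
  obtain ⟨S, hScard, hS⟩ := hα.1
  have hα1 : 1 ≤ α := hα.2 ⟨{v₀}, card_singleton v₀, by simp_all⟩
  have hδ1 : 1 ≤ δ := hv₀ ▸ hiso v₀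
  have hvol : volR E S + volR E Sᶜ = k * m := by
    rw [volR, volR, sum_add_sum_compl, ← hm]
    exact_mod_cast sum_hdeg_eq_mul_card E hunif
  have hαδ : (α * δ : ℝ) ≤ volR E S := by
    rw [← hScard, ← nsmul_eq_mul, ← sum_const]
    exact sum_le_sum fun v _ => by exact_mod_cast hδ.2 ⟨v, rfl⟩
  have hkey := volR_add_volR_compl_le_lamMax_mul E (fun e he => hunif e he ▸ hk) hiso hS
    (card_pos.mp (by omega))
  have hτ : 0 ≤ volR E Sᶜ := sum_nonneg fun v _ => by positivity
  have hαδ1 : (1 : ℝ) ≤ α * δ := by exact_mod_cast Nat.one_le_iff_ne_zero.mpr (by positivity)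
  have hτpos : 0 < volR E Sᶜ := hτ.lt_of_ne fun h => by rw [← h, mul_zero] at hkey; linarith
  rw [div_le_iff₀ (by linarith)]
  nlinarith
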